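/- Let C be a non-leaking cycle of length m of an initialized DiPA A, let ρ=ρ'Cρ'' be a run of A from the initial state, let p=|ρ'| (so C occupies positions p,…,p+m−1 of ρ), and for L>0 let ρ_L=ρ'C^Lρ''. If (i,j) is an edge in the dependency graph G_ρ (respectively, (j,i) is an edge), then: (1) at most one of the two indices i,j is a position on the cycle C; (2) if i<p (i is before C) and j is on C, then G_{ρ_L} contains the edge (i, j+km) (respectively, (j+km, i)) for every k with 0≤k<L; (3) if i≥p+m (i is after C) and j is on C, then G_{ρ_L} contains the edge (i+m(L−1), j+m(L−1)) (respectively, (j+m(L−1), i+m(L−1))). -/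
import Mathlib


/-!  Formalization of DiPA (Differentially Private Automata) with multiple storage
variables, following Chadha–Sistla–Viswanathan–Bhusal. -/

/-- A guard: for each storage variable, `none` means the variable is unconstrained,
`some true` means the atomic condition `insample ≥ x_i` is a conjunct, and
`some false` means `insample < x_i` is a conjunct.  The guard `true` is `fun _ => none`. -/
abbrev Guard (k : ℕ) := Fin k → Option Bool

/-- Satisfaction of a guard by a sampled value `z` and a valuation `η` of the
storage variables. -/
def GuardSat {k : ℕ} (c : Guard k) (z : ℝ) (η : Fin k → ℝ) : Prop :=
  ∀ i, (c i = some true → η i ≤ z) ∧ (c i = some false → z < η i)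

/-- The data of a DiPA, without the axioms (used also for the augmentation).
Outputs are elements of `Γ ⊕ Bool` where `Sum.inr false` denotes `insample` and
`Sum.inr true` denotes `insample'`.  `P q = (d, μ, d', μ')`. -/
structure PreDiPA (k : ℕ) where
  Q : Type
  Γ : Type
  isInput : Q → Bool
  qinit : Q
  P : Q → ℚ × ℚ × ℚ × ℚ
  δ : Q → Guard k → Option (Q × (Γ ⊕ Bool) × (Fin k → Bool))

namespace PreDiPA

variable {k : ℕ}

/-- A transition `t = (q, c, q', o, b)` with `δ q c = some (q', o, b)`. -/
structure Trans (A : PreDiPA k) where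
  src : A.Q
  grd : Guard k
  trg : A.Q
  out : A.Γ ⊕ Bool
  asgn : Fin k → Bool
  valid : A.δ src grd = some (trg, out, asgn)

/-- Input sequences: `none` denotes `τ`. -/
abbrev InSeq := List (Option ℝ)

/-- Output sequences. -/
abbrev OutSeq (A : PreDiPA k) := List (A.Γ ⊕ EReal × EReal)

section RunLevel

variable {A : PreDiPA k}

/-- A run is a chained sequence of transitions. -/
def IsRun (ρ : List A.Trans) : Prop :=
  List.Chain' (fun t t' => t.trg = t'.src) ρ

/-- A run starting at state `q`. -/
def IsRunFrom (q : A.Q) (ρ : List A.Trans) : Prop :=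
  IsRun ρ ∧ ∀ t, ρ.head? = some t → t.src = q

/-- Whether the `i`-th transition of `ρ` assigns `insample` to `x`. -/
def assignAt (ρ : List A.Trans) (x : Fin k) (i : ℕ) : Bool :=
  (ρ[i]?).elim false fun t => t.asgn x

/-- The constraint placed on variable `x` by the guard of the `i`-th transition. -/
def grdAt (ρ : List A.Trans) (x : Fin k) (i : ℕ) : Option Bool :=
  (ρ[i]?).elim none fun t => t.grd x

/-- `lastassign ρ x j` is the largest `i < j` such that the `i`-th transition assigns
`x`, and `⊥` (i.e. `−∞`) if there is no such `i`. -/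
def lastassign (ρ : List A.Trans) (x : Fin k) (j : ℕ) : WithBot ℕ :=
  ((Finset.range j).filter fun i => assignAt ρ x i = true).max

/-- Edges of the dependency graph `G_ρ`: an edge `(j, lastassign ρ x j)` for every `j`
with `x ∈ largev(t_j)`, and an edge `(lastassign ρ x j, j)` for every `j` with
`x ∈ smallv(t_j)` (keeping only edges whose endpoints are vertices). -/
def DepEdge (ρ : List A.Trans) (a b : ℕ) : Prop :=
  (∃ x, a < ρ.length ∧ grdAt ρ x a = some false ∧ lastassign ρ x a = (b : WithBot ℕ)) ∨
  (∃ x, b < ρ.length ∧ grdAt ρ x b = some true ∧ lastassign ρ x b = (a : WithBot ℕ))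

/-- A run is feasible iff its dependency graph is acyclic. -/
def Feasible (ρ : List A.Trans) : Prop :=
  ∀ a b, DepEdge ρ a b → ¬ Relation.ReflTransGen (DepEdge ρ) b a

/-- A cycle is a run whose first state coincides with its last state. -/
def IsCycle (ρ : List A.Trans) : Prop :=
  IsRun ρ ∧ ∃ t₁ t₂, ρ.head? = some t₁ ∧ ρ.getLast? = some t₂ ∧ t₁.src = t₂.trg

/-- A cycle `C` is non-leaking if no variable used (referenced in a guard) in `C²`
has been assigned within `C²`. -/
def NonLeakingCycle (C : List A.Trans) : Prop :=
  IsCycle C ∧ ∀ x i, grdAt (C ++ C) x i ≠ none → lastassign (C ++ C) x i = ⊥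

/-- The slice `ρ[i:j]`. -/
def slice (ρ : List A.Trans) (i j : ℕ) : List A.Trans := (ρ.drop i).take (j - i)

/-- `m`-fold concatenation `C^m` of a sequence of transitions with itself. -/
def repRun (C : List A.Trans) : ℕ → List A.Trans
  | 0 => []
  | m + 1 => C ++ repRun C m

/-- `ρ` is a run on input sequence `σ` producing output sequence `γ`. -/
def IsRunOn (ρ : List A.Trans) (σ : InSeq) (γ : OutSeq A) : Prop :=
  ρ.length = σ.length ∧ ρ.length = γ.length ∧
  ∀ (i : ℕ) (t : A.Trans), ρ[i]? = some t →
    (σ[i]? = some none ↔ A.isInput t.src = false) ∧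
    (∀ g : A.Γ, t.out = Sum.inl g → γ[i]? = some (Sum.inl g)) ∧
    (∀ b : Bool, t.out = Sum.inr b → ∃ p : EReal × EReal, γ[i]? = some (Sum.inr p))

end RunLevel

/-- Integral of `f` over the open interval `(l, u)` with extended-real endpoints
(`0` if the interval is empty). -/
noncomputable def intE (l u : EReal) (f : ℝ → ℝ) : ℝ :=
  ∫ z in {z : ℝ | l < (z : EReal) ∧ (z : EReal) < u}, f z

/-- The density of the Laplace distribution with scale `s` and mean `m`. -/
noncomputable def lap (s m z : ℝ) : ℝ := s / 2 * Real.exp (-s * |z - m|)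

section ProbDef

variable {A : PreDiPA k}

/-- `Prob ε ρ σ γ η` is the probability of the computation `κ = (ρ, σ, γ)` for the
privacy budget `ε` and the initial valuation `η`. -/
noncomputable def Prob (ε : ℝ) : List A.Trans → InSeq → OutSeq A → (Fin k → ℝ) → ℝ
  | [], _, _, _ => 1
  | t :: ρ, σ, γ, η =>
    let d : ℝ := ((A.P t.src).1 : ℝ)
    let μ : ℝ := ((A.P t.src).2.1 : ℝ)
    let d' : ℝ := ((A.P t.src).2.2.1 : ℝ)
    let μ' : ℝ := ((A.P t.src).2.2.2 : ℝ)
    let a0 : ℝ := match σ.head? with | some (some a) => a | _ => 0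
    let lu : EReal × EReal := match γ.head? with | some (Sum.inr p) => p | _ => (⊥, ⊤)
    let smax : EReal :=
      (Finset.univ.filter fun i => t.grd i = some true).sup fun i => ((η i : ℝ) : EReal)
    let lmin : EReal :=
      (Finset.univ.filter fun i => t.grd i = some false).inf fun i => ((η i : ℝ) : EReal)
    match t.out with
    | Sum.inr true =>
        intE lu.1 lu.2 (fun z => lap (d' * ε) (μ' + a0) z) *
        intE smax lmin (fun z => lap (d * ε) (μ + a0) z *
          Prob ε ρ σ.tail γ.tail fun i => if t.asgn i then z else η i)
    | _ =>
        intE (max smax lu.1) (min lmin lu.2) (fun z => lap (d * ε) (μ + a0) z *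
          Prob ε ρ σ.tail γ.tail fun i => if t.asgn i then z else η i)

end ProbDef

/-- Adjacency of single entries of input sequences. -/
def AdjEntry : Option ℝ → Option ℝ → Prop
  | some a, some b => |a - b| ≤ 1
  | none, none => True
  | _, _ => False

/-- Adjacency of input sequences. -/
def Adjacent (σ₁ σ₂ : InSeq) : Prop := List.Forall₂ AdjEntry σ₁ σ₂

/-- The total probability, over all runs from the initial state on `σ` producing `γ`,
of the respective computations.  (For runs from the initial state of an initialized
automaton, `Prob` does not depend on the initial valuation, so we fix it to be `0`.) -/
noncomputable def runProbSum (A : PreDiPA k) (ε : ℝ) (σ : InSeq) (γ : OutSeq A) : ℝ :=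
  ∑' ρ : {ρ : List A.Trans // IsRunFrom A.qinit ρ ∧ IsRunOn ρ σ γ},
    Prob ε ρ.val σ γ fun _ => 0

/-- `A` is `D·ε`-differentially private. -/
def DPat (A : PreDiPA k) (D ε : ℝ) : Prop :=
  ∀ σ₁ σ₂ (γ : OutSeq A), Adjacent σ₁ σ₂ →
    runProbSum A ε σ₁ γ ≤ Real.exp (D * ε) * runProbSum A ε σ₂ γ

/-- `A` is differentially private. -/
def DiffPrivate (A : PreDiPA k) : Prop := ∃ D > (0 : ℝ), ∀ ε > (0 : ℝ), DPat A D ε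

/-- `A` is initialized: on every run from the initial state, every variable referenced
in a guard has been assigned by an earlier transition. -/
def Initialized (A : PreDiPA k) : Prop :=
  ∀ ρ : List A.Trans, IsRunFrom A.qinit ρ →
    ∀ i x, grdAt ρ x i ≠ none → ∃ j < i, assignAt ρ x j = true

section BadRuns

variable {A : PreDiPA k}

/-- A leaking cycle. -/
def LeakingCycle (ρ : List A.Trans) : Prop :=
  IsRunFrom A.qinit ρ ∧
  ∃ j < ρ.length, IsCycle (ρ.drop j) ∧
    (∃ i₁ i₂ x, j ≤ i₁ ∧ j ≤ i₂ ∧ assignAt ρ x i₁ = true ∧ grdAt ρ x i₂ ≠ none) ∧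
    ∀ m : ℕ, Feasible (ρ ++ repRun (ρ.drop j) m)

/-- A leaking pair. -/
def LeakingPair (ρ : List A.Trans) : Prop :=
  IsRunFrom A.qinit ρ ∧ Feasible ρ ∧
  ∃ i₁ j₁ i₂ j₂ : ℕ, i₁ < j₁ ∧ j₁ ≤ ρ.length ∧ i₂ < j₂ ∧ j₂ ≤ ρ.length ∧
    NonLeakingCycle (slice ρ i₁ j₁) ∧ NonLeakingCycle (slice ρ i₂ j₂) ∧
    (j₁ ≤ i₂ ∨ j₂ ≤ i₁) ∧
    ∃ ks : List ℕ, 2 ≤ ks.length ∧ List.Chain' (DepEdge ρ) ks ∧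
      i₁ ≤ ks.head! ∧ ks.head! < j₁ ∧ i₂ ≤ ks.getLast! ∧ ks.getLast! < j₂ ∧
      ks[1]! < ks.head! ∧ ks[ks.length - 2]! < ks.getLast!

/-- A disclosing cycle. -/
def DisclosingCycle (ρ : List A.Trans) : Prop :=
  IsRunFrom A.qinit ρ ∧ Feasible ρ ∧
  ∃ j i : ℕ, j ≤ i ∧ i < ρ.length ∧ NonLeakingCycle (ρ.drop j) ∧
    ∃ t, ρ[i]? = some t ∧ A.isInput t.src = true ∧ ∃ b : Bool, t.out = Sum.inr b

/-- A privacy violating path. -/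
def PrivacyViolating (ρ : List A.Trans) : Prop :=
  IsRunFrom A.qinit ρ ∧ Feasible ρ ∧
  ∃ i j : ℕ, i ≤ j ∧ j ≤ ρ.length ∧ NonLeakingCycle (slice ρ i j) ∧
    ∃ ks : List ℕ, 2 ≤ ks.length ∧ List.Chain' (DepEdge ρ) ks ∧
      (((∃ t, ρ[ks.head!]? = some t ∧ t.out = Sum.inr false) ∧
          ks[ks.length - 2]! < ks.getLast! ∧ i ≤ ks.getLast! ∧ ks.getLast! < j) ∨
       (i ≤ ks.head! ∧ ks.head! < j ∧ ks[1]! < ks.head! ∧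
          ∃ t, ρ[ks.getLast!]? = some t ∧ t.out = Sum.inr false))

/-- A feasible run is strongly feasible if the sampling means at non-input positions
respect the order imposed by the dependency graph. -/
def StronglyFeasible (ρ : List A.Trans) : Prop :=
  Feasible ρ ∧
  ∀ i j ti tj, Relation.TransGen (DepEdge ρ) i j → ρ[i]? = some ti → ρ[j]? = some tj →
    A.isInput ti.src = false → A.isInput tj.src = false →
    (A.P ti.src).2.1 < (A.P tj.src).2.1

end BadRuns

/-- `A` is well-formed: no leaking cycles, leaking pairs, disclosing cycles or
privacy violating paths. -/
def WellFormed (A : PreDiPA k) : Prop :=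
  (∀ ρ : List A.Trans, ¬ LeakingCycle ρ) ∧ (∀ ρ : List A.Trans, ¬ LeakingPair ρ) ∧
  (∀ ρ : List A.Trans, ¬ DisclosingCycle ρ) ∧ (∀ ρ : List A.Trans, ¬ PrivacyViolating ρ)

/-- Output distinction. -/
def OutputDistinct (A : PreDiPA k) : Prop :=
  ∀ t₁ t₂ : A.Trans, t₁ ≠ t₂ → t₁.src = t₂.src →
    t₁.out ≠ t₂.out ∧ ((∃ g, t₁.out = Sum.inl g) ∨ (∃ g, t₂.out = Sum.inl g))

/-- The strong feasibility assumption: every feasible run from the initial state is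
strongly feasible. -/
def StrongFeasibility (A : PreDiPA k) : Prop :=
  ∀ ρ : List A.Trans, IsRunFrom A.qinit ρ → Feasible ρ → StronglyFeasible ρ

end PreDiPA

/-- A DiPA: a `PreDiPA` whose state space and output alphabet are finite, whose scale
parameters are nonnegative, which is deterministic (guards of distinct transitions
from the same state are jointly unsatisfiable) and in which all transitions from
non-input states carry the guard `true`. -/
structure DiPA (k : ℕ) extends PreDiPA k where
  finQ : Finite Q
  finΓ : Finite Γ
  dNonneg : ∀ q, 0 ≤ (P q).1
  d'Nonneg : ∀ q, 0 ≤ (P q).2.2.1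
  determinism : ∀ q c c' r r', δ q c = some r → δ q c' = some r' → c ≠ c' →
    ¬ ∃ (z : ℝ) (η : Fin k → ℝ), GuardSat c z η ∧ GuardSat c' z η
  noninput_true : ∀ q c r, isInput q = false → δ q c = some r → c = fun _ => none

open PreDiPA

namespace PreDiPA

variable {k : ℕ} {A : PreDiPA k}

lemma repRun_length (C : List A.Trans) (L : ℕ) : (repRun C L).length = L * C.length := by
  induction L with
  | zero => simp [repRun]
  | succ n ih => simp [repRun, ih]; ring

lemma repRun_getElem? (C : List A.Trans) {q L r : ℕ} (hq : q < L) (hr : r < C.length) :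
    (repRun C L)[q * C.length + r]? = C[r]? := by
  induction q generalizing L with
  | zero =>
    obtain ⟨L', rfl⟩ : ∃ L', L = L' + 1 := ⟨L - 1, by omega⟩
    show (C ++ repRun C L')[0 * C.length + r]? = C[r]?
    rw [Nat.zero_mul, Nat.zero_add]
    exact List.getElem?_append_left hr
  | succ q ih =>
    obtain ⟨L', rfl⟩ : ∃ L', L = L' + 1 := ⟨L - 1, by omega⟩
    show (C ++ repRun C L')[(q + 1) * C.length + r]? = C[r]?
    rw [show (q + 1) * C.length + r = C.length + (q * C.length + r) by ring,
      List.getElem?_append_right (by omega), Nat.add_sub_cancel_left]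
    exact ih (by omega)

lemma assignAt_congr {ρ₁ ρ₂ : List A.Trans} {x : Fin k} {a b : ℕ}
    (h : ρ₁[a]? = ρ₂[b]?) : assignAt ρ₁ x a = assignAt ρ₂ x b := by
  simp [assignAt, h]

lemma grdAt_congr {ρ₁ ρ₂ : List A.Trans} {x : Fin k} {a b : ℕ}
    (h : ρ₁[a]? = ρ₂[b]?) : grdAt ρ₁ x a = grdAt ρ₂ x b := by
  simp [grdAt, h]

lemma get3_left {ρ₁ ρ₂ ρ₃ : List A.Trans} {s : ℕ} (h : s < ρ₁.length) :
    (ρ₁ ++ ρ₂ ++ ρ₃)[s]? = ρ₁[s]? := by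
  rw [List.getElem?_append_left (by simp only [List.length_append]; omega),
    List.getElem?_append_left h]

lemma get3_mid {ρ₁ ρ₂ ρ₃ : List A.Trans} {s : ℕ} (h1 : ρ₁.length ≤ s)
    (h2 : s < ρ₁.length + ρ₂.length) :
    (ρ₁ ++ ρ₂ ++ ρ₃)[s]? = ρ₂[s - ρ₁.length]? := by
  rw [List.getElem?_append_left (by simp only [List.length_append]; omega),
    List.getElem?_append_right h1]

lemma get3_right {ρ₁ ρ₂ ρ₃ : List A.Trans} {s : ℕ} (h : ρ₁.length + ρ₂.length ≤ s) :
    (ρ₁ ++ ρ₂ ++ ρ₃)[s]? = ρ₃[s - ρ₁.length - ρ₂.length]? := by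
  rw [List.getElem?_append_right (by simp only [List.length_append]; omega)]
  congr 1
  simp only [List.length_append]
  omega

lemma lastassign_eq_coe_iff {ρ : List A.Trans} {x : Fin k} {j b : ℕ} :
    lastassign ρ x j = (b : WithBot ℕ) ↔
      b < j ∧ assignAt ρ x b = true ∧ ∀ s, b < s → s < j → assignAt ρ x s = false := by
  unfold lastassign
  rw [show ((b : WithBot ℕ)) = WithBot.some b from rfl]
  constructor
  · intro h
    have hb := Finset.mem_of_max h
    simp only [Finset.mem_filter, Finset.mem_range] at hb
    refine ⟨hb.1, hb.2, fun s hbs hsj => ?_⟩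
    by_contra hs
    rw [Bool.not_eq_false] at hs
    have hmem : s ∈ (Finset.range j).filter fun i => assignAt ρ x i = true := by
      simp only [Finset.mem_filter, Finset.mem_range]; exact ⟨hsj, hs⟩
    have hle := Finset.le_max hmem
    rw [h] at hle
    exact absurd (WithBot.coe_le_coe.mp hle) (by omega)
  · rintro ⟨hbj, hbA, hmax⟩
    apply le_antisymm
    · rw [Finset.max_le_iff]
      intro a ha
      simp only [Finset.mem_filter, Finset.mem_range] at ha
      rcases Nat.lt_or_ge b a with h' | h'
      · have := hmax a h' ha.1
        rw [this] at ha
        exact absurd ha.2 (by simp)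
      · exact WithBot.coe_le_coe.mpr h'
    · exact Finset.le_max (by simp only [Finset.mem_filter, Finset.mem_range]; exact ⟨hbj, hbA⟩)

lemma lastassign_eq_bot_iff {ρ : List A.Trans} {x : Fin k} {j : ℕ} :
    lastassign ρ x j = ⊥ ↔ ∀ s < j, assignAt ρ x s = false := by
  unfold lastassign
  rw [Finset.max_eq_bot, Finset.filter_eq_empty_iff]
  simp

/-- In a non-leaking cycle, if some guard constrains `x` then no transition assigns `x`. -/
lemma nonleaking_noAssign {C : List A.Trans} (hC : NonLeakingCycle C) {x : Fin k} {r : ℕ}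
    (hr : r < C.length) (hg : grdAt C x r ≠ none) :
    ∀ s < C.length, assignAt C x s = false := by
  have hcc : (C ++ C)[C.length + r]? = C[r]? := by
    rw [List.getElem?_append_right (by omega), Nat.add_sub_cancel_left]
  have hbot := hC.2 x (C.length + r) (by rwa [grdAt_congr hcc])
  rw [lastassign_eq_bot_iff] at hbot
  intro s hs
  have h := hbot s (by omega)
  rwa [assignAt_congr (List.getElem?_append_left hs)] at h

end PreDiPA


theorem depEdge_cycle_repetition {k : ℕ} (A : DiPA k)
    (hinit : Initialized A.toPreDiPA)
    (ρ' C ρ'' : List A.toPreDiPA.Trans) (m : ℕ) (hm : C.length = m)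
    (hC : NonLeakingCycle C)
    (hrun : IsRunFrom A.toPreDiPA.qinit (ρ' ++ C ++ ρ''))
    (L : ℕ) (hL : 0 < L) :
    (∀ a b : ℕ, DepEdge (ρ' ++ C ++ ρ'') a b →
      ¬(ρ'.length ≤ a ∧ a < ρ'.length + m ∧ ρ'.length ≤ b ∧ b < ρ'.length + m)) ∧
    (∀ i j : ℕ, i < ρ'.length → ρ'.length ≤ j → j < ρ'.length + m →
      (DepEdge (ρ' ++ C ++ ρ'') i j →
        ∀ k' : ℕ, k' < L → DepEdge (ρ' ++ repRun C L ++ ρ'') i (j + k' * m)) ∧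
      (DepEdge (ρ' ++ C ++ ρ'') j i →
        ∀ k' : ℕ, k' < L → DepEdge (ρ' ++ repRun C L ++ ρ'') (j + k' * m) i)) ∧
    (∀ i j : ℕ, ρ'.length + m ≤ i → ρ'.length ≤ j → j < ρ'.length + m →
      (DepEdge (ρ' ++ C ++ ρ'') i j →
        DepEdge (ρ' ++ repRun C L ++ ρ'') (i + m * (L - 1)) (j + m * (L - 1))) ∧
      (DepEdge (ρ' ++ C ++ ρ'') j i →
        DepEdge (ρ' ++ repRun C L ++ ρ'') (j + m * (L - 1)) (i + m * (L - 1)))) := by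
  subst hm
  have hLrep := repRun_length (A := A.toPreDiPA) C L
  have hcomm : L * C.length = C.length * L := Nat.mul_comm _ _
  refine ⟨?_, ?_, ?_⟩
  · -- Part 1: no edge with both endpoints on the cycle
    have key : ∀ (u v : ℕ) (x : Fin k), grdAt (ρ' ++ C ++ ρ'') x u ≠ none →
        lastassign (ρ' ++ C ++ ρ'') x u = (v : WithBot ℕ) →
        ρ'.length ≤ u → u < ρ'.length + C.length →
        ρ'.length ≤ v → v < ρ'.length + C.length → False := by
      intro u v x hg hl hu1 hu2 hv1 hv2
      obtain ⟨hvu, hva, -⟩ := lastassign_eq_coe_iff.mp hl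
      have eg := grdAt_congr (A := A.toPreDiPA) (x := x) (get3_mid (ρ₂ := C) (ρ₃ := ρ'') hu1 hu2)
      have ea := assignAt_congr (A := A.toPreDiPA) (x := x) (get3_mid (ρ₂ := C) (ρ₃ := ρ'') hv1 hv2)
      have hna := nonleaking_noAssign hC (show u - ρ'.length < C.length by omega)
        (by rw [← eg]; exact hg)
      have hfalse := hna (v - ρ'.length) (by omega)
      rw [ea] at hva
      rw [hfalse] at hva
      simp at hva
    rintro a b (⟨x, ha, hg, hl⟩ | ⟨x, hb, hg, hl⟩) ⟨h1, h2, h3, h4⟩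
    · exact key a b x (by rw [hg]; simp) hl h1 h2 h3 h4
    · exact key b a x (by rw [hg]; simp) hl h3 h4 h1 h2
  · -- Part 2: edges from before the cycle
    intro i j hi hj1 hj2
    have hm0 : 0 < C.length := by omega
    have common : ∀ (x : Fin k) (k' : ℕ), k' < L →
        grdAt (ρ' ++ C ++ ρ'') x j ≠ none →
        lastassign (ρ' ++ C ++ ρ'') x j = (i : WithBot ℕ) →
        grdAt (ρ' ++ repRun C L ++ ρ'') x (j + k' * C.length) = grdAt (ρ' ++ C ++ ρ'') x j ∧
        lastassign (ρ' ++ repRun C L ++ ρ'') x (j + k' * C.length) = (i : WithBot ℕ) := by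
      intro x k' hk' hgn hl
      have hkm : k' * C.length + C.length ≤ L * C.length := by
        have h := Nat.mul_le_mul_right C.length (show k' + 1 ≤ L by omega)
        rwa [Nat.succ_mul] at h
      obtain ⟨hij, hia, hnone⟩ := lastassign_eq_coe_iff.mp hl
      have egj := grdAt_congr (A := A.toPreDiPA) (x := x) (get3_mid (ρ₂ := C) (ρ₃ := ρ'') hj1 hj2)
      have hgC : grdAt C x (j - ρ'.length) ≠ none := by rw [← egj]; exact hgn
      have hna := nonleaking_noAssign hC (show j - ρ'.length < C.length by omega) hgC
      have eLj : (ρ' ++ repRun C L ++ ρ'')[j + k' * C.length]? = C[j - ρ'.length]? := by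
        rw [get3_mid (by omega) (by rw [hLrep]; omega),
          show j + k' * C.length - ρ'.length = k' * C.length + (j - ρ'.length) by omega]
        exact repRun_getElem? C hk' (by omega)
      refine ⟨by rw [grdAt_congr eLj, egj], ?_⟩
      rw [lastassign_eq_coe_iff]
      refine ⟨by omega, ?_, ?_⟩
      · rw [assignAt_congr (get3_left (ρ₂ := repRun C L) (ρ₃ := ρ'') hi)]
        rwa [assignAt_congr (get3_left (ρ₂ := C) (ρ₃ := ρ'') hi)] at hia
      · intro s hs1 hs2
        rcases Nat.lt_or_ge s ρ'.length with hsp | hsp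
        · rw [assignAt_congr (get3_left (ρ₂ := repRun C L) (ρ₃ := ρ'') hsp)]
          have h := hnone s hs1 (by omega)
          rwa [assignAt_congr (get3_left (ρ₂ := C) (ρ₃ := ρ'') hsp)] at h
        · obtain ⟨q, r, hq, hr, hqr⟩ :
              ∃ q r, q < L ∧ r < C.length ∧ s - ρ'.length = q * C.length + r := by
            have hsL : s - ρ'.length < L * C.length := by omega
            exact ⟨(s - ρ'.length) / C.length, (s - ρ'.length) % C.length,
              by rw [Nat.div_lt_iff_lt_mul hm0]; omega,
              Nat.mod_lt _ hm0, (Nat.div_add_mod' _ _).symm⟩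
          rw [assignAt_congr (x := x) (show (ρ' ++ repRun C L ++ ρ'')[s]? = C[r]? from by
            rw [get3_mid hsp (by rw [hLrep]; omega), hqr]
            exact repRun_getElem? C hq hr)]
          exact hna r hr
    constructor
    · rintro (⟨x, hilen, hg, hl⟩ | ⟨x, hjlen, hg, hl⟩) k' hk'
      · obtain ⟨hji, -, -⟩ := lastassign_eq_coe_iff.mp hl
        omega
      · obtain ⟨hge, hle'⟩ := common x k' hk' (by rw [hg]; simp) hl
        refine Or.inr ⟨x, ?_, by rw [hge, hg], hle'⟩
        have h := Nat.mul_le_mul_right C.length (show k' + 1 ≤ L by omega)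
        rw [Nat.succ_mul] at h
        simp only [List.length_append, hLrep]
        omega
    · rintro (⟨x, hjlen, hg, hl⟩ | ⟨x, hilen, hg, hl⟩) k' hk'
      · obtain ⟨hge, hle'⟩ := common x k' hk' (by rw [hg]; simp) hl
        refine Or.inl ⟨x, ?_, by rw [hge, hg], hle'⟩
        have h := Nat.mul_le_mul_right C.length (show k' + 1 ≤ L by omega)
        rw [Nat.succ_mul] at h
        simp only [List.length_append, hLrep]
        omega
      · obtain ⟨hji, -, -⟩ := lastassign_eq_coe_iff.mp hl
        omega
  · -- Part 3: edges from after the cycle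
    intro i j hi hj1 hj2
    have hm0 : 0 < C.length := by omega
    have hml : C.length * (L - 1) + C.length = C.length * L := by
      rw [← Nat.mul_succ]
      congr 1
      omega
    have hq1 : (L - 1) * C.length = C.length * (L - 1) := Nat.mul_comm _ _
    have common : ∀ (x : Fin k), i < (ρ' ++ C ++ ρ'').length →
        lastassign (ρ' ++ C ++ ρ'') x i = (j : WithBot ℕ) →
        grdAt (ρ' ++ repRun C L ++ ρ'') x (i + C.length * (L - 1)) = grdAt (ρ' ++ C ++ ρ'') x i ∧
        lastassign (ρ' ++ repRun C L ++ ρ'') x (i + C.length * (L - 1)) =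
          ((j + C.length * (L - 1) : ℕ) : WithBot ℕ) := by
      intro x hilen hl
      obtain ⟨hji, hja, hnone⟩ := lastassign_eq_coe_iff.mp hl
      constructor
      · rw [grdAt_congr (get3_right (ρ₂ := repRun C L) (ρ₃ := ρ'') (by rw [hLrep]; omega)),
          grdAt_congr (get3_right (ρ₂ := C) (ρ₃ := ρ'') (show ρ'.length + C.length ≤ i by omega))]
        congr 1
        rw [hLrep]
        omega
      · rw [lastassign_eq_coe_iff]
        refine ⟨by omega, ?_, ?_⟩
        · rw [assignAt_congr (x := x)
            (show (ρ' ++ repRun C L ++ ρ'')[j + C.length * (L - 1)]? = C[j - ρ'.length]? from by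
              rw [get3_mid (by omega) (by rw [hLrep]; omega),
                show j + C.length * (L - 1) - ρ'.length = (L - 1) * C.length + (j - ρ'.length)
                  by omega]
              exact repRun_getElem? C (q := L - 1) (L := L) (by omega) (by omega))]
          rwa [assignAt_congr (get3_mid (ρ₂ := C) (ρ₃ := ρ'') hj1 hj2)] at hja
        · intro s hs1 hs2
          rcases Nat.lt_or_ge s (ρ'.length + L * C.length) with hsm | hsm
          · obtain ⟨r, hrj, hrm, hsr⟩ : ∃ r, j - ρ'.length < r ∧ r < C.length ∧
                s - ρ'.length = (L - 1) * C.length + r :=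
              ⟨s - ρ'.length - C.length * (L - 1), by omega, by omega, by omega⟩
            rw [assignAt_congr (x := x) (show (ρ' ++ repRun C L ++ ρ'')[s]? = C[r]? from by
              rw [get3_mid (ρ₁ := ρ') (ρ₂ := repRun C L) (ρ₃ := ρ'') (by omega)
                  (by rw [hLrep]; omega), hsr]
              exact repRun_getElem? C (q := L - 1) (L := L) (by omega) hrm)]
            have h := hnone (ρ'.length + r) (by omega) (by omega)
            rw [assignAt_congr (get3_mid (ρ₂ := C) (ρ₃ := ρ'') (by omega) (by omega))] at h
            rwa [Nat.add_sub_cancel_left] at h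
          · rw [assignAt_congr (get3_right (ρ₂ := repRun C L) (ρ₃ := ρ'')
              (by rw [hLrep]; omega))]
            have h := hnone (s - C.length * (L - 1)) (by omega) (by omega)
            rw [assignAt_congr (get3_right (ρ₂ := C) (ρ₃ := ρ'') (by omega))] at h
            rwa [show s - C.length * (L - 1) - ρ'.length - C.length =
              s - ρ'.length - (repRun C L).length from by rw [hLrep]; omega] at h
    constructor
    · rintro (⟨x, hilen, hg, hl⟩ | ⟨x, hjlen2, hg, hl⟩)
      · obtain ⟨hge, hle'⟩ := common x hilen hl
        refine Or.inl ⟨x, ?_, by rw [hge, hg], hle'⟩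
        simp only [List.length_append, hLrep] at hilen ⊢
        omega
      · obtain ⟨hij2, -, -⟩ := lastassign_eq_coe_iff.mp hl
        omega
    · rintro (⟨x, hjlen2, hg, hl⟩ | ⟨x, hilen, hg, hl⟩)
      · obtain ⟨hij2, -, -⟩ := lastassign_eq_coe_iff.mp hl
        omega
      · obtain ⟨hge, hle'⟩ := common x hilen hl
        refine Or.inr ⟨x, ?_, by rw [hge, hg], hle'⟩
        simp only [List.length_append, hLrep] at hilen ⊢
        omega
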